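/- Let E and F be maximal sets in the Schreier family S_α of order α (for any countable ordinal α, with a fixed choice of approximating sequences at limit ordinals). If F is a spreading of E, then min E = min F. -/

import Mathlib

/-- The Schreier family: the empty set together with all finite nonempty sets `F` of
positive integers with `|F| ≤ min F`. -/
def Schreier : Set (Finset ℕ) :=
  {F | F = ∅ ∨ ∃ h : F.Nonempty, (∀ n ∈ F, 0 < n) ∧ F.card ≤ F.min' h}

/-- A family of finite subsets of `ℕ` is hereditary if it is closed under subsets. -/
def Hereditary (𝓕 : Set (Finset ℕ)) : Prop := ∀ F ∈ 𝓕, ∀ E ⊆ F, E ∈ 𝓕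

/-- A family is spreading if it is stable under moving elements to the right. -/
def Spreading (𝓕 : Set (Finset ℕ)) : Prop :=
  ∀ F ∈ 𝓕, ∀ σ : ℕ → ℕ, (∀ n ∈ F, n ≤ σ n) →
    (∀ m ∈ F, ∀ n ∈ F, m < n → σ m < σ n) → F.image σ ∈ 𝓕

/-- A family is compact if, identified with a set of characteristic functions in the
Cantor space `ℕ → Bool`, it is closed (equivalently, compact). -/
def CompactFamily (𝓕 : Set (Finset ℕ)) : Prop :=
  IsClosed {f : ℕ → Bool | ∃ F ∈ 𝓕, f = fun n => decide (n ∈ F)}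

/-- A regular family: hereditary, spreading, compact, and containing all singletons. -/
def RegularFamily (𝓕 : Set (Finset ℕ)) : Prop :=
  Hereditary 𝓕 ∧ Spreading 𝓕 ∧ CompactFamily 𝓕 ∧ ∀ n : ℕ, {n} ∈ 𝓕

/-- `F` is a maximal member of `𝓕` with respect to inclusion. -/
def MaximalIn (𝓕 : Set (Finset ℕ)) (F : Finset ℕ) : Prop :=
  F ∈ 𝓕 ∧ ∀ G ∈ 𝓕, F ⊆ G → F = G
/-- The successor step of the Schreier hierarchy: admissible unions of sets of the
previous family. -/
def SchreierSucc (𝓐 : Set (Finset ℕ)) : Set (Finset ℕ) :=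
  {F | F = ∅ ∨ ∃ (k : ℕ) (E : Fin k → Finset ℕ) (hne : ∀ j, (E j).Nonempty),
    (∀ j, E j ∈ 𝓐) ∧
    (∀ j j' : Fin k, j < j' → ∀ a ∈ E j, ∀ b ∈ E j', a < b) ∧
    (Finset.univ.image (fun j => (E j).min' (hne j)) ∈ Schreier) ∧
    F = Finset.univ.biUnion E}

/-- A system of Schreier families `S_α`, with a fixed choice, for each countable limit
ordinal, of an increasing sequence of ordinals converging to it. -/
structure SchreierSystem where
  fam : Ordinal → Set (Finset ℕ)
  approx : Ordinal → ℕ → Ordinal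
  one_eq : fam 1 = Schreier
  succ_eq : ∀ α : Ordinal, fam (α + 1) = SchreierSucc (fam α)
  approx_pos : ∀ α : Ordinal, ∀ n : ℕ, 1 ≤ approx α n
  approx_strictMono : ∀ α : Ordinal, Order.IsSuccLimit α → α.card ≤ Cardinal.aleph0 →
    StrictMono (approx α)
  approx_lt : ∀ α : Ordinal, Order.IsSuccLimit α → α.card ≤ Cardinal.aleph0 → ∀ n, approx α n < α
  approx_sup : ∀ α : Ordinal, Order.IsSuccLimit α → α.card ≤ Cardinal.aleph0 →
    (⨆ n, approx α n) = α
  limit_eq : ∀ α : Ordinal, Order.IsSuccLimit α → α.card ≤ Cardinal.aleph0 →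
    fam α = {F | F = ∅ ∨ ∃ h : F.Nonempty, ∃ n : ℕ,
      1 ≤ n ∧ n ≤ F.min' h ∧ F ∈ fam (approx α n)}

/-!
Call `E` right-maximal in `𝓕` if no `E ∪ {N}` with `N > max E` lies in `𝓕`; maximal sets are
right-maximal, and we prove the claim for right-maximal `E` and `σ(E)` by induction on `α`.
In `S₁` a right-maximal set satisfies `|E| = min E`, and `|σ(E)| = |E|`. In `S_{β+1}` a
right-maximal admissible union of `k` blocks has `min E = k` (otherwise append the block `{N}`),
and `σ` carries a decomposition of `E` into `k` blocks to one of `σ(E)`, since `S_β` is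
spreading. At a limit `α`, `E ∈ S_{α_n}` with `n ≤ min E ≤ min σ(E)`; appending `N > max E` does
not lower the minimum, so right-maximality in `S_α` passes down to `S_{α_n}` (maximality
itself need not), and the induction hypothesis applies there.
-/

open Finset

theorem Finset.min'_image_of_monotoneOn {σ : ℕ → ℕ} {s : Finset ℕ} (hσ : MonotoneOn σ s)
    (hs : s.Nonempty) : (s.image σ).min' (hs.image σ) = σ (s.min' hs) :=
  le_antisymm (min'_le _ _ (mem_image_of_mem σ (min'_mem s hs)))
    (le_min' _ _ _ (forall_mem_image.2 fun _ ha ↦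
      hσ (min'_mem s hs) ha (min'_le s _ ha)))

theorem mem_schreier_iff {F : Finset ℕ} :
    F ∈ Schreier ↔ (∀ n ∈ F, 0 < n) ∧ ∀ n ∈ F, F.card ≤ n := by
  rcases F.eq_empty_or_nonempty with rfl | hF
  · simp [Schreier]
  · simp only [Schreier, Set.mem_ofPred_eq, hF.ne_empty, false_or, le_min'_iff, exists_prop,
      and_iff_right hF]

theorem spreading_schreier : Spreading Schreier := by
  intro F hF σ hge _
  rw [mem_schreier_iff] at hF ⊢
  refine ⟨forall_mem_image.2 fun n hn ↦ (hF.1 n hn).trans_le (hge n hn),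
    forall_mem_image.2 fun n hn ↦ ?_⟩
  exact card_image_le.trans ((hF.2 n hn).trans (hge n hn))

theorem insert_mem_schreier {S : Finset ℕ} {N : ℕ} (hS : ∀ a ∈ S, S.card < a)
    (hN : S.card < N) : insert N S ∈ Schreier := by
  have hle : ∀ n ∈ insert N S, S.card + 1 ≤ n := (forall_mem_insert _ _ _).2 ⟨hN, hS⟩
  rw [mem_schreier_iff]
  exact ⟨fun n hn ↦ (hle n hn).trans_lt' S.card.succ_pos,
    fun n hn ↦ (S.card_insert_le N).trans (hle n hn)⟩

def IsRightMaximal (𝓕 : Set (Finset ℕ)) (F : Finset ℕ) : Prop :=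
  ∀ N, (∀ a ∈ F, a < N) → insert N F ∉ 𝓕

theorem MaximalIn.isRightMaximal {𝓕 : Set (Finset ℕ)} {F : Finset ℕ} (hF : MaximalIn 𝓕 F) :
    IsRightMaximal 𝓕 F := fun N hN hmem ↦
  (hN N (hF.2 _ hmem (subset_insert N F) ▸ mem_insert_self N F)).false

theorem IsRightMaximal.exists_le {𝓕 : Set (Finset ℕ)} {F : Finset ℕ} (hF : IsRightMaximal 𝓕 F)
    {k : ℕ} (hext : (∀ a ∈ F, k < a) → ∀ N, k < N → (∀ a ∈ F, a < N) → insert N F ∈ 𝓕) :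
    ∃ a ∈ F, a ≤ k := by
  by_contra! h
  have hlt : ∀ a ∈ F, a < F.sup id + k + 1 := fun a ha ↦ by
    have : a ≤ F.sup id := le_sup (f := id) ha
    omega
  exact hF _ hlt (hext h _ (by omega) hlt)

theorem card_eq_min'_of_isRightMaximal_schreier {E : Finset ℕ} (hE : E.Nonempty)
    (hmem : E ∈ Schreier) (hmax : IsRightMaximal Schreier E) : E.card = E.min' hE := by
  rw [mem_schreier_iff] at hmem
  obtain ⟨a, ha, hak⟩ := hmax.exists_le fun h N hN _ ↦ insert_mem_schreier h hN
  exact le_antisymm ((le_min'_iff _ _).2 hmem.2) ((min'_le _ _ ha).trans hak)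

theorem Fin.univ_eq_insert_last_image_castSucc (k : ℕ) :
    (univ : Finset (Fin (k + 1))) = insert (Fin.last k) (univ.image Fin.castSucc) := by
  rw [Fin.image_castSucc, insert_compl_self]

def IsAdmissibleUnion (𝓐 : Set (Finset ℕ)) (k : ℕ) (F : Finset ℕ) : Prop :=
  ∃ (E : Fin k → Finset ℕ) (hne : ∀ j, (E j).Nonempty),
    (∀ j, E j ∈ 𝓐) ∧
    (∀ j j' : Fin k, j < j' → ∀ a ∈ E j, ∀ b ∈ E j', a < b) ∧
    (univ.image (fun j => (E j).min' (hne j)) ∈ Schreier) ∧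
    F = univ.biUnion E

theorem mem_schreierSucc_iff {𝓐 : Set (Finset ℕ)} {F : Finset ℕ} :
    F ∈ SchreierSucc 𝓐 ↔ F = ∅ ∨ ∃ k, IsAdmissibleUnion 𝓐 k F :=
  Iff.rfl

theorem card_image_min'_of_lt {k : ℕ} {E : Fin k → Finset ℕ} (hne : ∀ j, (E j).Nonempty)
    (hord : ∀ j j' : Fin k, j < j' → ∀ a ∈ E j, ∀ b ∈ E j', a < b) :
    (univ.image fun j => (E j).min' (hne j)).card = k := by
  have hmono : StrictMono fun j => (E j).min' (hne j) :=
    fun j j' h ↦ hord j j' h _ (min'_mem _ _) _ (min'_mem _ _)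
  rw [card_image_of_injective _ hmono.injective, card_univ, Fintype.card_fin]

namespace IsAdmissibleUnion

variable {𝓐 : Set (Finset ℕ)} {k : ℕ} {F : Finset ℕ}

theorem le_of_mem (hF : IsAdmissibleUnion 𝓐 k F) : ∀ a ∈ F, k ≤ a := by
  obtain ⟨E, hne, -, hord, hmins, rfl⟩ := hF
  intro a ha
  obtain ⟨j, -, hj⟩ := mem_biUnion.1 ha
  calc k = (univ.image fun j => (E j).min' (hne j)).card := (card_image_min'_of_lt hne hord).symm
    _ ≤ (E j).min' (hne j) := (mem_schreier_iff.1 hmins).2 _ (mem_image_of_mem _ (mem_univ j))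
    _ ≤ a := min'_le _ _ hj

theorem image (h𝓐 : Spreading 𝓐) (hF : IsAdmissibleUnion 𝓐 k F) {σ : ℕ → ℕ}
    (hmono : StrictMonoOn σ F) (hge : ∀ n ∈ F, n ≤ σ n) :
    IsAdmissibleUnion 𝓐 k (F.image σ) := by
  obtain ⟨E, hne, hmem, hord, hmins, rfl⟩ := hF
  have hsub : ∀ j, E j ⊆ univ.biUnion E := fun j ↦ subset_biUnion_of_mem E (mem_univ j)
  have hmins_image : (univ.image fun j => ((E j).image σ).min' ((hne j).image σ)) =
      (univ.image fun j => (E j).min' (hne j)).image σ := by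
    rw [Finset.image_image]
    exact image_congr fun j _ ↦
      min'_image_of_monotoneOn ((hmono.mono (coe_subset.2 (hsub j))).monotoneOn) (hne j)
  refine ⟨fun j ↦ (E j).image σ, fun j ↦ (hne j).image σ, fun j ↦ ?_, ?_, ?_, ?_⟩
  · exact h𝓐 _ (hmem j) σ (fun n hn ↦ hge n (hsub j hn))
      (hmono.mono (coe_subset.2 (hsub j)))
  · intro j j' hjj' _ hσa _ hσb
    obtain ⟨a, ha, rfl⟩ := mem_image.1 hσa
    obtain ⟨b, hb, rfl⟩ := mem_image.1 hσb
    exact hmono (hsub j ha) (hsub j' hb) (hord j j' hjj' a ha b hb)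
  · rw [hmins_image]
    have hminsub : (univ.image fun j => (E j).min' (hne j)) ⊆ univ.biUnion E :=
      image_subset_iff.2 fun j _ ↦ hsub j (min'_mem _ _)
    exact spreading_schreier _ hmins σ (fun n hn ↦ hge n (hminsub hn))
      (hmono.mono (coe_subset.2 hminsub))
  · rw [biUnion_image]

theorem empty : IsAdmissibleUnion 𝓐 0 ∅ :=
  ⟨Fin.elim0, fun j ↦ j.elim0, fun j ↦ j.elim0, fun j ↦ j.elim0, by simp [Schreier], by simp⟩

theorem insert (hF : IsAdmissibleUnion 𝓐 k F) (hk : ∀ a ∈ F, k < a) {N : ℕ}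
    (hN : {N} ∈ 𝓐) (hkN : k < N) (hFN : ∀ a ∈ F, a < N) :
    IsAdmissibleUnion 𝓐 (k + 1) (insert N F) := by
  obtain ⟨E, hne, hmem, hord, hmins, rfl⟩ := hF
  let E' : Fin (k + 1) → Finset ℕ := Fin.snoc E {N}
  have hne' : ∀ j, (E' j).Nonempty := Fin.lastCases (by simp [E']) (by simpa [E'] using hne)
  refine ⟨E', hne', Fin.lastCases (by simpa [E'] using hN) (by simpa [E'] using hmem), ?_, ?_, ?_⟩
  · intro j j' hjj'
    cases j' using Fin.lastCases with
    | last =>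
      cases j using Fin.lastCases with
      | last => exact absurd hjj' (lt_irrefl _)
      | cast i =>
        intro a ha b hb
        simp only [E', Fin.snoc_castSucc, Fin.snoc_last, mem_singleton] at ha hb
        exact hb ▸ hFN a (mem_biUnion.2 ⟨i, mem_univ i, ha⟩)
    | cast i' =>
      cases j using Fin.lastCases with
      | last => exact absurd hjj' (Fin.le_last _).not_gt
      | cast i => simpa [E'] using hord i i' (Fin.castSucc_lt_castSucc_iff.1 hjj')
  · have hmins_castSucc : (fun j ↦ (E' j).min' (hne' j)) ∘ Fin.castSucc =
        fun j ↦ (E j).min' (hne j) := funext fun j ↦ by simp [E']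
    rw [Fin.univ_eq_insert_last_image_castSucc, image_insert, image_image, hmins_castSucc]
    simp only [E', Fin.snoc_last, min'_singleton]
    refine insert_mem_schreier (fun a ha ↦ ?_) ?_ <;> rw [card_image_min'_of_lt hne hord]
    · obtain ⟨j, -, rfl⟩ := mem_image.1 ha
      exact hk _ (mem_biUnion.2 ⟨j, mem_univ j, min'_mem _ _⟩)
    · exact hkN
  · rw [Fin.univ_eq_insert_last_image_castSucc, biUnion_insert, image_biUnion]
    simp [E']

theorem min'_eq_of_isRightMaximal (h𝓐 : ∀ n, 0 < n → {n} ∈ 𝓐)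
    (hF : IsAdmissibleUnion 𝓐 k F) (hne : F.Nonempty) (hmax : IsRightMaximal (SchreierSucc 𝓐) F) :
    F.min' hne = k := by
  obtain ⟨a, ha, hak⟩ := hmax.exists_le fun hk N hkN hFN ↦
    Or.inr ⟨k + 1, hF.insert hk (h𝓐 N (by omega)) hkN hFN⟩
  exact le_antisymm ((min'_le _ _ ha).trans hak) ((le_min'_iff _ _).2 hF.le_of_mem)

end IsAdmissibleUnion

theorem Spreading.schreierSucc {𝓐 : Set (Finset ℕ)} (h𝓐 : Spreading 𝓐) :
    Spreading (SchreierSucc 𝓐) := by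
  intro F hF σ hge hmono
  rcases mem_schreierSucc_iff.1 hF with rfl | ⟨k, hF⟩
  · exact Or.inl (image_empty σ)
  · exact Or.inr ⟨k, hF.image h𝓐 hmono hge⟩

theorem singleton_mem_schreierSucc {𝓐 : Set (Finset ℕ)} {n : ℕ} (hn : {n} ∈ 𝓐) (hpos : 0 < n) :
    {n} ∈ SchreierSucc 𝓐 :=
  mem_schreierSucc_iff.2 <| Or.inr ⟨1, by
    simpa only [insert_empty] using IsAdmissibleUnion.empty.insert (by simp) hn hpos (by simp)⟩

theorem Ordinal.induction_of_countable_of_one_le {P : Ordinal → Prop} (one : P 1)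
    (succ : ∀ β, 1 ≤ β → β.card ≤ Cardinal.aleph0 → P β → P (β + 1))
    (limit : ∀ α, Order.IsSuccLimit α → α.card ≤ Cardinal.aleph0 → (∀ β < α, 1 ≤ β → P β) →
      P α) :
    ∀ α, 1 ≤ α → α.card ≤ Cardinal.aleph0 → P α := by
  intro α
  induction α using WellFoundedLT.induction with
  | _ α IH =>
  intro h1 hc
  have IH' : ∀ β < α, 1 ≤ β → P β := fun β hβ h1β ↦
    IH β hβ h1β ((Ordinal.card_le_card hβ.le).trans hc)
  rcases Ordinal.zero_or_succ_or_isSuccLimit α with rfl | ⟨β, rfl⟩ | hlim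
  · exact absurd h1 (by simp)
  · rcases eq_or_ne β 0 with rfl | hβ
    · simpa using one
    · rw [Order.succ_eq_add_one] at hc IH' ⊢
      have h1β : 1 ≤ β := Order.one_le_iff_ne_zero.2 hβ
      exact succ β h1β ((Ordinal.card_le_card (lt_add_one β).le).trans hc)
        (IH' β (lt_add_one β) h1β)
  · exact limit α hlim hc IH'

namespace SchreierSystem

variable (sys : SchreierSystem) {α : Ordinal}

theorem mem_fam_of_isSuccLimit (hα : Order.IsSuccLimit α) (hc : α.card ≤ Cardinal.aleph0)
    {F : Finset ℕ} {n : ℕ} (hn : 1 ≤ n) (hF : ∀ a ∈ F, n ≤ a)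
    (hmem : F ∈ sys.fam (sys.approx α n)) : F ∈ sys.fam α := by
  rw [sys.limit_eq α hα hc]
  rcases F.eq_empty_or_nonempty with rfl | hne
  · exact Or.inl rfl
  · exact Or.inr ⟨hne, n, hn, (le_min'_iff _ _).2 hF, hmem⟩

theorem exists_mem_fam_approx (hα : Order.IsSuccLimit α) (hc : α.card ≤ Cardinal.aleph0)
    {F : Finset ℕ} (hne : F.Nonempty) (hF : F ∈ sys.fam α) :
    ∃ n, 1 ≤ n ∧ (∀ a ∈ F, n ≤ a) ∧ F ∈ sys.fam (sys.approx α n) := by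
  rw [sys.limit_eq α hα hc] at hF
  obtain ⟨_, n, hn, hmin, hmem⟩ := hF.resolve_left hne.ne_empty
  exact ⟨n, hn, (le_min'_iff _ _).1 hmin, hmem⟩

theorem isRightMaximal_approx (hα : Order.IsSuccLimit α) (hc : α.card ≤ Cardinal.aleph0)
    {F : Finset ℕ} (hne : F.Nonempty) {n : ℕ} (hn : 1 ≤ n) (hF : ∀ a ∈ F, n ≤ a)
    (hmax : IsRightMaximal (sys.fam α) F) : IsRightMaximal (sys.fam (sys.approx α n)) F := by
  intro N hN hmem
  obtain ⟨b, hb⟩ := hne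
  exact hmax N hN (sys.mem_fam_of_isSuccLimit hα hc hn
    ((forall_mem_insert _ _ _).2 ⟨(hF b hb).trans (hN b hb).le, hF⟩) hmem)

theorem spreading_fam : ∀ α, 1 ≤ α → α.card ≤ Cardinal.aleph0 → Spreading (sys.fam α) := by
  apply Ordinal.induction_of_countable_of_one_le
  · exact sys.one_eq ▸ spreading_schreier
  · exact fun β _ _ h ↦ sys.succ_eq β ▸ h.schreierSucc
  · intro α hα hc IH F hF σ hge hmono
    rcases F.eq_empty_or_nonempty with rfl | hne
    · simpa using hF
    obtain ⟨n, hn, hFn, hmem⟩ := sys.exists_mem_fam_approx hα hc hne hF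
    exact sys.mem_fam_of_isSuccLimit hα hc hn
      (forall_mem_image.2 fun a ha ↦ (hFn a ha).trans (hge a ha))
      (IH _ (sys.approx_lt α hα hc n) (sys.approx_pos α n) F hmem σ hge hmono)

theorem singleton_mem_fam :
    ∀ α, 1 ≤ α → α.card ≤ Cardinal.aleph0 → ∀ n, 0 < n → {n} ∈ sys.fam α := by
  apply Ordinal.induction_of_countable_of_one_le
  · intro n hn
    rw [sys.one_eq, mem_schreier_iff]
    simp [hn, Nat.succ_le_of_lt hn]
  · exact fun β _ _ h n hn ↦ sys.succ_eq β ▸ singleton_mem_schreierSucc (h n hn) hn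
  · intro α hα hc IH n hn
    exact sys.mem_fam_of_isSuccLimit hα hc le_rfl (by simpa using Nat.succ_le_of_lt hn)
      (IH _ (sys.approx_lt α hα hc 1) (sys.approx_pos α 1) n hn)

theorem min'_eq_min'_image_of_isRightMaximal :
    ∀ α, 1 ≤ α → α.card ≤ Cardinal.aleph0 →
    ∀ {E : Finset ℕ} (hE : E.Nonempty), E ∈ sys.fam α → IsRightMaximal (sys.fam α) E →
    ∀ {σ : ℕ → ℕ}, StrictMonoOn σ E → (∀ n ∈ E, n ≤ σ n) →
    IsRightMaximal (sys.fam α) (E.image σ) → E.min' hE = (E.image σ).min' (hE.image σ) := by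
  apply Ordinal.induction_of_countable_of_one_le
  · intro E hE hmem hmax σ hmono hge hmaxF
    rw [sys.one_eq] at hmem hmax hmaxF
    have hmemF := spreading_schreier E hmem σ hge hmono
    rw [← card_eq_min'_of_isRightMaximal_schreier hE hmem hmax,
      ← card_eq_min'_of_isRightMaximal_schreier (hE.image σ) hmemF hmaxF,
      card_image_of_injOn hmono.injOn]
  · intro β h1 hc _ E hE hmem hmax σ hmono hge hmaxF
    rw [sys.succ_eq] at hmem hmax hmaxF
    obtain ⟨k, hk⟩ := (mem_schreierSucc_iff.1 hmem).resolve_left hE.ne_empty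
    have hsingle := sys.singleton_mem_fam β h1 hc
    rw [hk.min'_eq_of_isRightMaximal hsingle hE hmax,
      (hk.image (sys.spreading_fam β h1 hc) hmono hge).min'_eq_of_isRightMaximal hsingle _ hmaxF]
  · intro α hα hc IH E hE hmem hmax σ hmono hge hmaxF
    obtain ⟨n, hn, hEn, hmemn⟩ := sys.exists_mem_fam_approx hα hc hE hmem
    have hFn : ∀ a ∈ E.image σ, n ≤ a := forall_mem_image.2 fun a ha ↦ (hEn a ha).trans (hge a ha)
    exact IH _ (sys.approx_lt α hα hc n) (sys.approx_pos α n) hE hmemn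
      (sys.isRightMaximal_approx hα hc hE hn hEn hmax) hmono hge
      (sys.isRightMaximal_approx hα hc (hE.image σ) hn hFn hmaxF)

end SchreierSystem

/-- If `E` and `F` are maximal in the Schreier family `S_α` and `F` is a spreading of
`E`, then `min E = min F`. -/
theorem schreierFamily_spreading_maximal_min (sys : SchreierSystem) (α : Ordinal)
    (h1 : 1 ≤ α) (hc : α.card ≤ Cardinal.aleph0) (E F : Finset ℕ)
    (hE : MaximalIn (sys.fam α) E) (hF : MaximalIn (sys.fam α) F)
    (hEne : E.Nonempty) (hFne : F.Nonempty) (σ : ℕ → ℕ)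
    (hmono : ∀ m ∈ E, ∀ n ∈ E, m < n → σ m < σ n)
    (hge : ∀ n ∈ E, n ≤ σ n) (himg : E.image σ = F) :
    E.min' hEne = F.min' hFne := by
  subst himg
  exact sys.min'_eq_min'_image_of_isRightMaximal α h1 hc hEne hE.1 hE.isRightMaximal hmono hge
    hF.isRightMaximal
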